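/- Let $0 < p \le 1 \le p_1, p_2$ with $1/p = 1/p_1 + 1/p_2$, let $R > 0$, and let $T$ be a bilinear operator such that for every $y \in \mathbb{R}^n$ and all $f \in L^{p_1}$, $g \in L^{p_2}$, $\|T(f,g)\|_{L^p(B(y, R/5))} \le A \|f\|_{L^{p_1}(B(y,R))} \|g\|_{L^{p_2}(B(y,R))}$. Then $\|T(f,g)\|_{L^p(\mathbb{R}^n)} \le 5^{n/p} A \|f\|_{L^{p_1}(\mathbb{R}^n)} \|g\|_{L^{p_2}(\mathbb{R}^n)}$. -/

import Mathlib

/-!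
Raise the local estimate to the power `p` and integrate it over the centre `y`. By Fubini,
integrating `∫_{B(y,r)} h` over `y` gives `|B(0,r)| ∫ h`, so the left side becomes
`|B(0,R/5)| ‖T(f,g)‖_p^p`. On the right, `p/p₁ + p/p₂ = 1`, so Hölder's inequality in `y`
bounds the integral of `(∫_{B(y,R)} |f|^{p₁})^{p/p₁} (∫_{B(y,R)} |g|^{p₂})^{p/p₂}` by
`|B(0,R)| ‖f‖_{p₁}^p ‖g‖_{p₂}^p`. The ratio of the two ball volumes is `5^n`.
-/

open MeasureTheory Metric Set
open scoped ENNReal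

lemma eLpNorm_ofReal_rpow {α ε : Type*} [MeasurableSpace α] [ENorm ε] (f : α → ε)
    (μ : Measure α) {p q : ℝ} (hq : 0 < q) :
    eLpNorm f (.ofReal q) μ ^ p = (∫⁻ x, ‖f x‖ₑ ^ q ∂μ) ^ (p / q) := by
  rw [eLpNorm_eq_eLpNorm' (by simpa using hq) ENNReal.ofReal_ne_top, ENNReal.toReal_ofReal hq.le,
    eLpNorm'_eq_lintegral_enorm, ← ENNReal.rpow_mul, one_div_mul_eq_div]

section BallAverages

variable {E : Type*} [NormedAddCommGroup E] [MeasurableSpace E] [BorelSpace E]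
  [SecondCountableTopology E] {μ : Measure E}

lemma aemeasurable_indicator_closedBall_prod {h : E → ℝ≥0∞} (hh : AEMeasurable h μ) (r : ℝ) :
    AEMeasurable (fun z : E × E => (closedBall z.1 r).indicator h z.2) (μ.prod μ) := by
  have hD : MeasurableSet {z : E × E | dist z.2 z.1 ≤ r} :=
    (isClosed_le (continuous_snd.dist continuous_fst) continuous_const).measurableSet
  exact (hh.comp_snd.indicator hD).congr (.of_forall fun z => rfl)

lemma lintegral_setLIntegral_closedBall [μ.IsAddHaarMeasure] [SFinite μ] {h : E → ℝ≥0∞}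
    (hh : AEMeasurable h μ) (r : ℝ) :
    ∫⁻ y, ∫⁻ x in closedBall y r, h x ∂μ ∂μ = μ (closedBall 0 r) * ∫⁻ x, h x ∂μ := by
  have hball : ∀ x y,
      (closedBall y r).indicator h x = (closedBall x r).indicator (fun _ => h x) y := by
    intro x y
    simp only [indicator, mem_closedBall, dist_comm]
  calc ∫⁻ y, ∫⁻ x in closedBall y r, h x ∂μ ∂μ
      = ∫⁻ y, ∫⁻ x, (closedBall y r).indicator h x ∂μ ∂μ := by
        simp_rw [lintegral_indicator measurableSet_closedBall]
    _ = ∫⁻ x, ∫⁻ y, (closedBall x r).indicator (fun _ => h x) y ∂μ ∂μ := by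
        rw [lintegral_lintegral_swap (aemeasurable_indicator_closedBall_prod hh r)]
        simp_rw [hball]
    _ = μ (closedBall 0 r) * ∫⁻ x, h x ∂μ := by
        simp_rw [lintegral_indicator_const measurableSet_closedBall,
          Measure.addHaar_closedBall_center]
        rw [lintegral_mul_const'' _ hh, mul_comm]

lemma aemeasurable_setLIntegral_closedBall [SFinite μ] {h : E → ℝ≥0∞} (hh : AEMeasurable h μ)
    (r : ℝ) :
    AEMeasurable (fun y => ∫⁻ x in closedBall y r, h x ∂μ) μ := by
  simp_rw [← lintegral_indicator measurableSet_closedBall]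
  exact (aemeasurable_indicator_closedBall_prod hh r).lintegral_prod_right'

lemma measure_closedBall_mul_lintegral_le [μ.IsAddHaarMeasure] [SFinite μ] (h : E → ℝ≥0∞)
    (r : ℝ) :
    μ (closedBall 0 r) * ∫⁻ x, h x ∂μ ≤ ∫⁻ y, ∫⁻ x in closedBall y r, h x ∂μ ∂μ := by
  -- `h` may be non-measurable (`T f g` is arbitrary): pass to a measurable minorant.
  obtain ⟨h', hm, hle, heq⟩ := exists_measurable_le_lintegral_eq μ h
  calc μ (closedBall 0 r) * ∫⁻ x, h x ∂μ = ∫⁻ y, ∫⁻ x in closedBall y r, h' x ∂μ ∂μ := by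
        rw [heq, lintegral_setLIntegral_closedBall hm.aemeasurable]
    _ ≤ _ := lintegral_mono fun y => lintegral_mono fun x => hle x

theorem measure_closedBall_mul_lintegral_le_of_forall_setLIntegral_le [μ.IsAddHaarMeasure]
    [SFinite μ] {h F G : E → ℝ≥0∞}
    (hF : AEMeasurable F μ) (hG : AEMeasurable G μ) {a b : ℝ} (ha : 0 ≤ a) (hb : 0 ≤ b)
    (hab : a + b = 1) {r ρ : ℝ} (C : ℝ≥0∞)
    (hloc : ∀ y, ∫⁻ x in closedBall y r, h x ∂μ ≤
      C * ((∫⁻ x in closedBall y ρ, F x ∂μ) ^ a * (∫⁻ x in closedBall y ρ, G x ∂μ) ^ b)) :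
    μ (closedBall 0 r) * ∫⁻ x, h x ∂μ ≤
      μ (closedBall 0 ρ) * (C * ((∫⁻ x, F x ∂μ) ^ a * (∫⁻ x, G x ∂μ) ^ b)) := by
  have hU := aemeasurable_setLIntegral_closedBall hF ρ
  have hV := aemeasurable_setLIntegral_closedBall hG ρ
  calc μ (closedBall 0 r) * ∫⁻ x, h x ∂μ ≤ ∫⁻ y, ∫⁻ x in closedBall y r, h x ∂μ ∂μ :=
        measure_closedBall_mul_lintegral_le h r
    _ ≤ ∫⁻ y, C * ((∫⁻ x in closedBall y ρ, F x ∂μ) ^ a *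
          (∫⁻ x in closedBall y ρ, G x ∂μ) ^ b) ∂μ := lintegral_mono hloc
    _ = C * ∫⁻ y, (∫⁻ x in closedBall y ρ, F x ∂μ) ^ a *
          (∫⁻ x in closedBall y ρ, G x ∂μ) ^ b ∂μ :=
        lintegral_const_mul'' _ ((hU.pow_const a).mul (hV.pow_const b))
    _ ≤ C * ((∫⁻ y, ∫⁻ x in closedBall y ρ, F x ∂μ ∂μ) ^ a *
          (∫⁻ y, ∫⁻ x in closedBall y ρ, G x ∂μ ∂μ) ^ b) := by
        gcongr
        exact ENNReal.lintegral_mul_norm_pow_le hU hV ha hb hab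
    _ = μ (closedBall 0 ρ) * (C * ((∫⁻ x, F x ∂μ) ^ a * (∫⁻ x, G x ∂μ) ^ b)) := by
        rw [lintegral_setLIntegral_closedBall hF, lintegral_setLIntegral_closedBall hG,
          ENNReal.mul_rpow_of_nonneg _ _ ha, ENNReal.mul_rpow_of_nonneg _ _ hb]
        calc C * (μ (closedBall 0 ρ) ^ a * (∫⁻ x, F x ∂μ) ^ a *
              (μ (closedBall 0 ρ) ^ b * (∫⁻ x, G x ∂μ) ^ b))
            = μ (closedBall 0 ρ) ^ (a + b) *
                (C * ((∫⁻ x, F x ∂μ) ^ a * (∫⁻ x, G x ∂μ) ^ b)) := by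
              rw [ENNReal.rpow_add_of_nonneg _ _ ha hb]; ring
          _ = _ := by rw [hab, ENNReal.rpow_one]

theorem measure_closedBall_mul_eLpNorm_rpow_le [μ.IsAddHaarMeasure] [SFinite μ]
    {ε₀ ε₁ ε₂ : Type*} [ENorm ε₀] [TopologicalSpace ε₁] [ContinuousENorm ε₁]
    [TopologicalSpace ε₂] [ContinuousENorm ε₂] {u : E → ε₀} {f : E → ε₁} {g : E → ε₂}
    (hf : AEStronglyMeasurable f μ) (hg : AEStronglyMeasurable g μ) {p p₁ p₂ : ℝ}
    (hp : 0 < p) (hp₁ : 0 < p₁) (hp₂ : 0 < p₂) (hpq : 1 / p = 1 / p₁ + 1 / p₂)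
    {r ρ : ℝ} (A : ℝ≥0∞)
    (hloc : ∀ y, eLpNorm u (.ofReal p) (μ.restrict (closedBall y r)) ≤
      A * eLpNorm f (.ofReal p₁) (μ.restrict (closedBall y ρ)) *
        eLpNorm g (.ofReal p₂) (μ.restrict (closedBall y ρ))) :
    μ (closedBall 0 r) * eLpNorm u (.ofReal p) μ ^ p ≤
      μ (closedBall 0 ρ) * (A * eLpNorm f (.ofReal p₁) μ * eLpNorm g (.ofReal p₂) μ) ^ p := by
  have hsum : p / p₁ + p / p₂ = 1 := by
    field_simp at hpq ⊢
    linarith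
  have hpow : ∀ ν : Measure E, (A * eLpNorm f (.ofReal p₁) ν * eLpNorm g (.ofReal p₂) ν) ^ p =
      A ^ p * ((∫⁻ x, ‖f x‖ₑ ^ p₁ ∂ν) ^ (p / p₁) * (∫⁻ x, ‖g x‖ₑ ^ p₂ ∂ν) ^ (p / p₂)) := by
    intro ν
    rw [ENNReal.mul_rpow_of_nonneg _ _ hp.le, ENNReal.mul_rpow_of_nonneg _ _ hp.le,
      eLpNorm_ofReal_rpow f ν hp₁, eLpNorm_ofReal_rpow g ν hp₂, mul_assoc]
  rw [eLpNorm_ofReal_rpow u μ hp, div_self hp.ne', ENNReal.rpow_one, hpow]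
  refine measure_closedBall_mul_lintegral_le_of_forall_setLIntegral_le
    (hf.enorm.pow_const p₁) (hg.enorm.pow_const p₂) (by positivity) (by positivity) hsum _
    fun y => ?_
  rw [← hpow, ← ENNReal.rpow_one (∫⁻ x in closedBall y r, _ ∂μ), ← div_self hp.ne',
    ← eLpNorm_ofReal_rpow u _ hp]
  gcongr
  exact hloc y

end BallAverages

theorem stmt9_general (n : ℕ) (p p₁ p₂ : ℝ)
    (hp0 : 0 < p) (hp₁ : 1 ≤ p₁) (hp₂ : 1 ≤ p₂)
    (hp : 1 / p = 1 / p₁ + 1 / p₂)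
    (R : ℝ) (hR : 0 < R) (A : ℝ)
    (T : (EuclideanSpace ℝ (Fin n) → ℂ) → (EuclideanSpace ℝ (Fin n) → ℂ) →
        (EuclideanSpace ℝ (Fin n) → ℂ))
    (hloc : ∀ (y : EuclideanSpace ℝ (Fin n))
        (f g : EuclideanSpace ℝ (Fin n) → ℂ),
        MemLp f (ENNReal.ofReal p₁) volume → MemLp g (ENNReal.ofReal p₂) volume →
        eLpNorm (T f g) (ENNReal.ofReal p) (volume.restrict (Metric.closedBall y (R / 5)))
          ≤ ENNReal.ofReal A *
              eLpNorm f (ENNReal.ofReal p₁) (volume.restrict (Metric.closedBall y R)) *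
              eLpNorm g (ENNReal.ofReal p₂) (volume.restrict (Metric.closedBall y R)))
    (f g : EuclideanSpace ℝ (Fin n) → ℂ)
    (hf : MemLp f (ENNReal.ofReal p₁) volume)
    (hg : MemLp g (ENNReal.ofReal p₂) volume) :
    eLpNorm (T f g) (ENNReal.ofReal p) volume
      ≤ ENNReal.ofReal ((5 : ℝ) ^ ((n : ℝ) / p) * A) *
          eLpNorm f (ENNReal.ofReal p₁) volume * eLpNorm g (ENNReal.ofReal p₂) volume := by
  set B : ℝ≥0∞ := volume (closedBall (0 : EuclideanSpace ℝ (Fin n)) (R / 5))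
  have hB : B ≠ 0 := (measure_closedBall_pos volume _ (by positivity)).ne'
  have hB' : B ≠ ∞ := measure_closedBall_lt_top.ne
  have hscale : volume (closedBall (0 : EuclideanSpace ℝ (Fin n)) R) =
      B * ENNReal.ofReal ((5 : ℝ) ^ ((n : ℝ) / p)) ^ p := by
    have := Measure.addHaar_closedBall_mul (volume : Measure (EuclideanSpace ℝ (Fin n))) 0
      (r := 5) (by norm_num) (s := R / 5) (by positivity)
    rw [finrank_euclideanSpace_fin, mul_div_cancel₀ _ (by norm_num : (5 : ℝ) ≠ 0)] at this
    rw [this, mul_comm, ENNReal.ofReal_rpow_of_nonneg (by positivity) hp0.le,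
      ← Real.rpow_mul (by positivity), div_mul_cancel₀ _ hp0.ne', Real.rpow_natCast]
  have key := measure_closedBall_mul_eLpNorm_rpow_le hf.1 hg.1 hp0 (by linarith) (by linarith)
    hp (.ofReal A) fun y => hloc y f g hf hg
  rw [hscale, mul_assoc, ENNReal.mul_le_mul_iff_right hB hB',
    ← ENNReal.mul_rpow_of_nonneg _ _ hp0.le, ENNReal.rpow_le_rpow_iff hp0] at key
  rw [ENNReal.ofReal_mul (by positivity)]
  simpa only [mul_assoc] using key

/-- If a bilinear operator satisfies the uniform local estimate
`‖T(f,g)‖_{L^p(B(y,R/5))} ≤ A ‖f‖_{L^{p₁}(B(y,R))} ‖g‖_{L^{p₂}(B(y,R))}` for every `y`,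
then `‖T(f,g)‖_{L^p(ℝⁿ)} ≤ 5^{n/p} A ‖f‖_{L^{p₁}} ‖g‖_{L^{p₂}}`. -/
theorem stmt9 (n : ℕ) (hn : 1 ≤ n) (p p₁ p₂ : ℝ)
    (hp0 : 0 < p) (hp1 : p ≤ 1) (hp₁ : 1 ≤ p₁) (hp₂ : 1 ≤ p₂)
    (hp : 1 / p = 1 / p₁ + 1 / p₂)
    (R : ℝ) (hR : 0 < R) (A : ℝ) (hA : 0 ≤ A)
    (T : (EuclideanSpace ℝ (Fin n) → ℂ) → (EuclideanSpace ℝ (Fin n) → ℂ) →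
        (EuclideanSpace ℝ (Fin n) → ℂ))
    (hloc : ∀ (y : EuclideanSpace ℝ (Fin n))
        (f g : EuclideanSpace ℝ (Fin n) → ℂ),
        MemLp f (ENNReal.ofReal p₁) volume → MemLp g (ENNReal.ofReal p₂) volume →
        eLpNorm (T f g) (ENNReal.ofReal p) (volume.restrict (Metric.closedBall y (R / 5)))
          ≤ ENNReal.ofReal A *
              eLpNorm f (ENNReal.ofReal p₁) (volume.restrict (Metric.closedBall y R)) *
              eLpNorm g (ENNReal.ofReal p₂) (volume.restrict (Metric.closedBall y R)))
    (f g : EuclideanSpace ℝ (Fin n) → ℂ)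
    (hf : MemLp f (ENNReal.ofReal p₁) volume)
    (hg : MemLp g (ENNReal.ofReal p₂) volume) :
    eLpNorm (T f g) (ENNReal.ofReal p) volume
      ≤ ENNReal.ofReal ((5 : ℝ) ^ ((n : ℝ) / p) * A) *
          eLpNorm f (ENNReal.ofReal p₁) volume * eLpNorm g (ENNReal.ofReal p₂) volume :=
  stmt9_general n p p₁ p₂ hp0 hp₁ hp₂ hp R hR A T hloc f g hf hg
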